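/- arXiv:2301.10101 — 4 statements merged into one kernel-verified Lean document; each statement's English description precedes it below -/
import Mathlib

section
/- For γ = 5/3, the ratio of eigenvalues k(r) = (r - 2 - √(2r-2))/(r - 2 + √(2r-2)) is a strictly monotonically increasing function of r on the interval (1, 3 - √3), and k(r) → ∞ as r → (3 - √3)⁻. -/
/-! With `s = √(2r - 2)` the ratio is `k r = 1 + 2s / (2 - r - s)`. On `(1, 3 - √3)` the
numerator `2s` is positive and increasing while the denominator `2 - r - s` is positive and
decreasing, so `k` is strictly increasing; at `r = 3 - √3` the denominator vanishes
(`3 - √3` is the smaller root of `(2 - r)^2 = 2r - 2`) while the numerator tends to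
`2(√3 - 1) > 0`, so `k → ∞`. -/

open Real Set Filter Topology

theorem StrictMonoOn.div_of_antitoneOn {s : Set ℝ} {f g : ℝ → ℝ} (hf : StrictMonoOn f s)
    (hf₀ : ∀ x ∈ s, 0 ≤ f x) (hg : AntitoneOn g s) (hg₀ : ∀ x ∈ s, 0 < g x) :
    StrictMonoOn (fun x => f x / g x) s := fun a ha b hb hab =>
  calc f a / g a < f b / g a := div_lt_div_of_pos_right (hf ha hb hab) (hg₀ a ha)
    _ ≤ f b / g b := div_le_div_of_nonneg_left (hf₀ b hb) (hg₀ b hb) (hg ha hb hab.le)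

theorem Filter.Tendsto.div_nhdsGT_zero_atTop {α : Type*} {l : Filter α} {f g : α → ℝ} {a : ℝ}
    (ha : 0 < a) (hf : Tendsto f l (𝓝 a)) (hg : Tendsto g l (𝓝[>] 0)) :
    Tendsto (fun x => f x / g x) l atTop := by
  simp only [div_eq_mul_inv]
  exact hf.pos_mul_atTop ha hg.inv_tendsto_nhdsGT_zero

theorem two_sub_sub_sqrt_two_mul_sub_two_pos {r : ℝ} (hr : r < 3 - √3) :
    0 < 2 - r - √(2 * r - 2) := by
  have h3 : √3 ^ 2 = 3 := sq_sqrt (by norm_num)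
  have h1 : 1 < √3 := lt_sqrt_of_sq_lt (by norm_num)
  rw [sub_pos, sqrt_lt' (by linarith)]
  nlinarith

theorem sqrt_two_mul_three_sub_sqrt_three_sub_two : √(2 * (3 - √3) - 2) = √3 - 1 := by
  have h3 : √3 ^ 2 = 3 := sq_sqrt (by norm_num)
  have h1 : 1 < √3 := lt_sqrt_of_sq_lt (by norm_num)
  rw [show 2 * (3 - √3) - 2 = (√3 - 1) ^ 2 by nlinarith, sqrt_sq (by linarith)]

theorem sub_div_add_eq_one_add_div {a s : ℝ} (h : a + s ≠ 0) :
    (a - s) / (a + s) = 1 + 2 * s / (-a - s) := by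
  have h' : -a - s ≠ 0 := by rwa [← neg_add', neg_ne_zero]
  field_simp
  ring

theorem tendsto_two_sub_sub_sqrt_two_mul_sub_two :
    Tendsto (fun r => 2 - r - √(2 * r - 2)) (𝓝[<] (3 - √3)) (𝓝[>] 0) := by
  refine tendsto_nhdsWithin_iff.2 ⟨?_, eventually_nhdsWithin_of_forall fun r hr => ?_⟩
  · have hc : 2 - (3 - √3) - √(2 * (3 - √3) - 2) = 0 := by
      rw [sqrt_two_mul_three_sub_sqrt_three_sub_two]; ring
    rw [← hc]
    exact (Continuous.tendsto (by fun_prop) _).mono_left nhdsWithin_le_nhds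
  · exact two_sub_sub_sqrt_two_mul_sub_two_pos hr

/-- For γ = 5/3, the eigenvalue ratio k(r) is strictly increasing on
(1, 3-√3) and tends to ∞ as r → (3-√3)⁻. -/
theorem stmt_2 (k : ℝ → ℝ)
    (hk : ∀ r, k r = (r - 2 - Real.sqrt (2 * r - 2)) / (r - 2 + Real.sqrt (2 * r - 2))) :
    StrictMonoOn k (Set.Ioo 1 (3 - Real.sqrt 3))
      ∧ Filter.Tendsto k (nhdsWithin (3 - Real.sqrt 3) (Set.Iio (3 - Real.sqrt 3)))
          Filter.atTop := by
  set c := 3 - √3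
  have hk_eq : EqOn (fun r => 1 + 2 * √(2 * r - 2) / (2 - r - √(2 * r - 2))) k (Iio c) := by
    intro r hr
    have hgap := two_sub_sub_sqrt_two_mul_sub_two_pos hr
    dsimp only
    rw [hk, sub_div_add_eq_one_add_div (by linarith), neg_sub]
  constructor
  · have hnum : StrictMonoOn (fun r => 2 * √(2 * r - 2)) (Ioo 1 c) := fun a ha b _ hab => by
      dsimp only
      gcongr
      linarith [ha.1]
    have hden : Antitone fun r => 2 - r - √(2 * r - 2) := fun a b hab => by dsimp only; gcongr
    refine (StrictMonoOn.const_add ?_ 1).congr (hk_eq.mono Ioo_subset_Iio_self)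
    exact hnum.div_of_antitoneOn (fun r _ => by positivity) (hden.antitoneOn _)
      fun r hr => two_sub_sub_sqrt_two_mul_sub_two_pos hr.2
  · have hnum : Tendsto (fun r => 2 * √(2 * r - 2)) (𝓝[<] c) (𝓝 (2 * (√3 - 1))) := by
      rw [← sqrt_two_mul_three_sub_sqrt_three_sub_two]
      exact (Continuous.tendsto (by fun_prop) c).mono_left nhdsWithin_le_nhds
    have hpos : 0 < 2 * (√3 - 1) := by
      linarith [lt_sqrt_of_sq_lt (show (1 : ℝ) ^ 2 < 3 by norm_num)]
    exact (tendsto_atTop_add_const_left _ 1 <|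
      hnum.div_nhdsGT_zero_atTop hpos tendsto_two_sub_sub_sqrt_two_mul_sub_two).congr'
        (eventually_nhdsWithin_of_forall hk_eq)
end

section
/- For γ = 5/3, the equation k(r) = n, where k(r) = (r - 2 - √(2r-2))/(r - 2 + √(2r-2)), has for n = 2 the unique solution r₂ = 11 - 3√11 in (1, 3-√3), for n = 3 the unique solution r₃ = 6 - 2√6, and for n = 4 the unique solution r₄ = (43 - 5√43)/9. -/
/-- On `(1, 3-√3)`, with `n ≥ 2`, the equation `k r = n` is equivalent to the
squared polynomial equation `(n-1)²(2-r)² = (n+1)²(2r-2)`. -/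
lemma stmt_3_aux (r n : ℝ) (hr1 : 1 < r) (hr2 : r < 3 - Real.sqrt 3) (hn : 2 ≤ n) :
    (r - 2 - Real.sqrt (2 * r - 2)) / (r - 2 + Real.sqrt (2 * r - 2)) = n ↔
      (n - 1) ^ 2 * (2 - r) ^ 2 = (n + 1) ^ 2 * (2 * r - 2) := by
  set s := Real.sqrt (2 * r - 2) with hs
  have hs2 : s ^ 2 = 2 * r - 2 := Real.sq_sqrt (by linarith)
  have hs0 : 0 < s := Real.sqrt_pos.mpr (by linarith)
  have h3 : Real.sqrt 3 ^ 2 = 3 := Real.sq_sqrt (by norm_num)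
  have h3n : (0:ℝ) ≤ Real.sqrt 3 := Real.sqrt_nonneg 3
  -- r < 3 - √3 < 2
  have hrlt2 : r < 2 := by nlinarith
  -- s < 2 - r
  have hslt : s < 2 - r := by
    have h1 : Real.sqrt 3 < 3 - r := by linarith
    have h2 : 3 < (3 - r) ^ 2 := by nlinarith
    have : s < Real.sqrt ((2 - r) ^ 2) :=
      Real.sqrt_lt_sqrt (by linarith) (by nlinarith)
    rwa [Real.sqrt_sq (by linarith)] at this
  have hne : r - 2 + s ≠ 0 := by intro h; linarith
  rw [div_eq_iff hne]
  constructor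
  · intro h
    have h' : (n - 1) * (2 - r) = (n + 1) * s := by linear_combination h
    linear_combination ((n - 1) * (2 - r) + (n + 1) * s) * h' + (n + 1) ^ 2 * hs2
  · intro h
    have hab : ((n - 1) * (2 - r) - (n + 1) * s) * ((n - 1) * (2 - r) + (n + 1) * s) = 0 := by
      linear_combination h - (n + 1) ^ 2 * hs2
    rcases mul_eq_zero.mp hab with h0 | h0
    · linear_combination h0
    · nlinarith

/-- For γ = 5/3, the equation k(r) = n has in (1, 3-√3) the unique solution
r₂ = 11 - 3√11 for n = 2, r₃ = 6 - 2√6 for n = 3, and r₄ = (43 - 5√43)/9 for n = 4. -/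
theorem stmt_3 (k : ℝ → ℝ)
    (hk : ∀ r, k r = (r - 2 - Real.sqrt (2 * r - 2)) / (r - 2 + Real.sqrt (2 * r - 2))) :
    (∀ r ∈ Set.Ioo 1 (3 - Real.sqrt 3), k r = 2 ↔ r = 11 - 3 * Real.sqrt 11)
    ∧ (∀ r ∈ Set.Ioo 1 (3 - Real.sqrt 3), k r = 3 ↔ r = 6 - 2 * Real.sqrt 6)
    ∧ (∀ r ∈ Set.Ioo 1 (3 - Real.sqrt 3), k r = 4 ↔ r = (43 - 5 * Real.sqrt 43) / 9)
    ∧ (11 - 3 * Real.sqrt 11) ∈ Set.Ioo 1 (3 - Real.sqrt 3)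
    ∧ (6 - 2 * Real.sqrt 6) ∈ Set.Ioo 1 (3 - Real.sqrt 3)
    ∧ ((43 - 5 * Real.sqrt 43) / 9) ∈ Set.Ioo 1 (3 - Real.sqrt 3) := by
  have h3 : Real.sqrt 3 ^ 2 = 3 := Real.sq_sqrt (by norm_num)
  have h11 : Real.sqrt 11 ^ 2 = 11 := Real.sq_sqrt (by norm_num)
  have h6 : Real.sqrt 6 ^ 2 = 6 := Real.sq_sqrt (by norm_num)
  have h43 : Real.sqrt 43 ^ 2 = 43 := Real.sq_sqrt (by norm_num)
  -- numeric bounds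
  have b3u : Real.sqrt 3 < 1.7321 := (Real.sqrt_lt' (by norm_num)).mpr (by norm_num)
  have b3l : (1.732:ℝ) < Real.sqrt 3 := (Real.lt_sqrt (by norm_num)).mpr (by norm_num)
  have b11u : Real.sqrt 11 < 3.3167 := (Real.sqrt_lt' (by norm_num)).mpr (by norm_num)
  have b11l : (3.3166:ℝ) < Real.sqrt 11 := (Real.lt_sqrt (by norm_num)).mpr (by norm_num)
  have b6u : Real.sqrt 6 < 2.4495 := (Real.sqrt_lt' (by norm_num)).mpr (by norm_num)
  have b6l : (2.4494:ℝ) < Real.sqrt 6 := (Real.lt_sqrt (by norm_num)).mpr (by norm_num)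
  have b43u : Real.sqrt 43 < 6.5575 := (Real.sqrt_lt' (by norm_num)).mpr (by norm_num)
  have b43l : (6.5574:ℝ) < Real.sqrt 43 := (Real.lt_sqrt (by norm_num)).mpr (by norm_num)
  refine ⟨?_, ?_, ?_, ⟨by nlinarith, by nlinarith⟩, ⟨by nlinarith, by nlinarith⟩,
    ⟨by nlinarith, by nlinarith⟩⟩
  · intro r ⟨hr1, hr2⟩
    rw [hk r, stmt_3_aux r 2 hr1 hr2 le_rfl]
    constructor
    · intro h
      have key : (r - (11 - 3 * Real.sqrt 11)) * (r - (11 + 3 * Real.sqrt 11)) = 0 := by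
        linear_combination h - 9 * h11
      rcases mul_eq_zero.mp key with h0 | h0
      · linarith
      · linarith
    · intro h; subst h; linear_combination 9 * h11
  · intro r ⟨hr1, hr2⟩
    rw [hk r, stmt_3_aux r 3 hr1 hr2 (by norm_num)]
    constructor
    · intro h
      have key : (r - (6 - 2 * Real.sqrt 6)) * (r - (6 + 2 * Real.sqrt 6)) = 0 := by
        linear_combination (1/4) * h - 4 * h6
      rcases mul_eq_zero.mp key with h0 | h0
      · linarith
      · linarith
    · intro h; subst h; linear_combination 16 * h6
  · intro r ⟨hr1, hr2⟩
    rw [hk r, stmt_3_aux r 4 hr1 hr2 (by norm_num)]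
    constructor
    · intro h
      have key : (r - (43 - 5 * Real.sqrt 43) / 9) * (r - (43 + 5 * Real.sqrt 43) / 9) = 0 := by
        linear_combination (1/9) * h - (25/81) * h43
      rcases mul_eq_zero.mp key with h0 | h0
      · linarith
      · linarith
    · intro h; subst h; linear_combination (25/9) * h43
end

section
/- For γ = 5/3 the map r ↦ k(r) = (r-2-√(2r-2))/(r-2+√(2r-2)) is a bijection from (1, 3-√3) onto (1, ∞), with k(r) → 1 as r → 1⁺. -/
/-!
Substituting `s = √(2r - 2)`, i.e. `r = 1 + s²/2`, turns `k` into the rational function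
`(s² - 2s - 2) / (s² + 2s - 2) = 1 + 4s / (2 - 2s - s²)`, whose denominator is positive exactly
for `0 ≤ s < √3 - 1`; there it is strictly increasing from `1` to `∞`. Solving `k = y` amounts to
the quadratic `s² + 2cs - 2 = 0` with `c = (y + 1)/(y - 1) > 1`, whose positive root lies below
the positive root `√3 - 1` of `s² + 2s - 2`.
-/

open Set Filter Topology Real

noncomputable section

def kRat (s : ℝ) : ℝ := (s ^ 2 - 2 * s - 2) / (s ^ 2 + 2 * s - 2)

lemma sqrt_three_sub_one_sq : (√3 - 1) ^ 2 = 2 * (3 - √3) - 2 := by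
  have h3 : √3 ^ 2 = 3 := sq_sqrt (by norm_num)
  linear_combination h3

lemma one_lt_sqrt_three : 1 < √3 := by
  rw [lt_sqrt zero_le_one]
  norm_num

lemma bijOn_sqrt_two_mul_sub_two :
    BijOn (fun r => √(2 * r - 2)) (Ioo 1 (3 - √3)) (Ioo 0 (√3 - 1)) := by
  have hinv : InvOn (fun s => 1 + s ^ 2 / 2) (fun r => √(2 * r - 2))
      (Ioo 1 (3 - √3)) (Ioo 0 (√3 - 1)) := by
    constructor
    · intro r ⟨hr1, _⟩
      simp only
      rw [sq_sqrt (by linarith)]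
      ring
    · intro s ⟨hs0, _⟩
      simp only
      rw [show 2 * (1 + s ^ 2 / 2) - 2 = s ^ 2 by ring, sqrt_sq hs0.le]
  refine hinv.bijOn ?_ ?_
  · intro r ⟨hr1, hr2⟩
    refine ⟨sqrt_pos.mpr (by linarith), ?_⟩
    rw [sqrt_lt' (by linarith [one_lt_sqrt_three]), sqrt_three_sub_one_sq]
    linarith
  · intro s ⟨hs0, hs1⟩
    have hsq : s ^ 2 < (√3 - 1) ^ 2 := pow_lt_pow_left₀ hs1 hs0.le two_ne_zero
    rw [sqrt_three_sub_one_sq] at hsq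
    constructor <;> nlinarith

lemma div_sqrt_two_mul_sub_two_eq_kRat {r : ℝ} (hr : 1 ≤ r) :
    (r - 2 - √(2 * r - 2)) / (r - 2 + √(2 * r - 2)) = kRat √(2 * r - 2) := by
  have hsq : √(2 * r - 2) ^ 2 = 2 * r - 2 := sq_sqrt (by linarith)
  rw [kRat, ← mul_div_mul_left _ (r - 2 + √(2 * r - 2)) two_ne_zero]
  congr 1 <;> linear_combination -hsq

lemma two_sub_two_mul_sub_sq_pos {s : ℝ} (hs0 : 0 ≤ s) (hs : s < √3 - 1) :
    0 < 2 - 2 * s - s ^ 2 := by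
  have h3 : √3 ^ 2 = 3 := sq_sqrt (by norm_num)
  nlinarith

lemma kRat_eq_one_add {s : ℝ} (h : 2 - 2 * s - s ^ 2 ≠ 0) :
    kRat s = 1 + 4 * s / (2 - 2 * s - s ^ 2) := by
  have h' : s ^ 2 + 2 * s - 2 ≠ 0 := fun h0 => h (by linear_combination -h0)
  rw [kRat, one_add_div h, div_eq_div_iff h' h]
  ring

lemma kRat_eq_of_sq_add_two_mul_sub_two_eq_zero {s c : ℝ} (hs : s ≠ 0)
    (h : s ^ 2 + 2 * c * s - 2 = 0) : kRat s = (c + 1) / (c - 1) := by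
  have hden : s ^ 2 + 2 * s - 2 = -2 * s * (c - 1) := by linear_combination h
  have hnum : s ^ 2 - 2 * s - 2 = -2 * s * (c + 1) := by linear_combination h
  rw [kRat, hden, hnum]
  exact mul_div_mul_left _ _ (mul_ne_zero (by norm_num) hs)

lemma strictMonoOn_kRat : StrictMonoOn kRat (Ioo 0 (√3 - 1)) := by
  intro s₁ ⟨hs₁, hs₁'⟩ s₂ ⟨hs₂, hs₂'⟩ hlt
  have hd₁ := two_sub_two_mul_sub_sq_pos hs₁.le hs₁'
  have hd₂ := two_sub_two_mul_sub_sq_pos hs₂.le hs₂'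
  rw [kRat_eq_one_add hd₁.ne', kRat_eq_one_add hd₂.ne', add_lt_add_iff_left]
  exact div_lt_div₀ (by linarith) (by nlinarith) (by linarith) hd₂

lemma mapsTo_kRat : MapsTo kRat (Ioo 0 (√3 - 1)) (Ioi 1) := by
  intro s ⟨hs0, hs1⟩
  have hd := two_sub_two_mul_sub_sq_pos hs0.le hs1
  rw [mem_Ioi, kRat_eq_one_add hd.ne']
  have : 0 < 4 * s / (2 - 2 * s - s ^ 2) := by positivity
  linarith

lemma surjOn_kRat : SurjOn kRat (Ioo 0 (√3 - 1)) (Ioi 1) := by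
  intro y (hy : 1 < y)
  set c := (y + 1) / (y - 1)
  have hc : 1 < c := by rw [one_lt_div (by linarith)]; linarith
  have hcy : (c + 1) / (c - 1) = y := by
    simp only [c]
    field_simp [(by linarith : y - 1 ≠ 0)]
    ring
  have hroot : √(c ^ 2 + 2) ^ 2 = c ^ 2 + 2 := sq_sqrt (by positivity)
  have hs0 : 0 < √(c ^ 2 + 2) - c := by
    nlinarith [sqrt_nonneg (c ^ 2 + 2)]
  have hquad : (√(c ^ 2 + 2) - c) ^ 2 + 2 * c * (√(c ^ 2 + 2) - c) - 2 = 0 := by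
    linear_combination hroot
  have h3 : √3 ^ 2 = 3 := sq_sqrt (by norm_num)
  have hs1 : √(c ^ 2 + 2) - c < √3 - 1 := by
    nlinarith [one_lt_sqrt_three]
  refine ⟨√(c ^ 2 + 2) - c, ⟨hs0, hs1⟩, ?_⟩
  rw [kRat_eq_of_sq_add_two_mul_sub_two_eq_zero hs0.ne' hquad, hcy]

lemma bijOn_kRat : BijOn kRat (Ioo 0 (√3 - 1)) (Ioi 1) :=
  ⟨mapsTo_kRat, strictMonoOn_kRat.injOn, surjOn_kRat⟩

end

/-- For γ = 5/3, k is a bijection from (1, 3-√3) onto (1, ∞), with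
k(r) → 1 as r → 1⁺. -/
theorem stmt_13 (k : ℝ → ℝ)
    (hk : ∀ r, k r = (r - 2 - Real.sqrt (2 * r - 2)) / (r - 2 + Real.sqrt (2 * r - 2))) :
    Set.BijOn k (Set.Ioo 1 (3 - Real.sqrt 3)) (Set.Ioi 1)
    ∧ Filter.Tendsto k (nhdsWithin 1 (Set.Ioi 1)) (nhds 1) := by
  have hk_eq : EqOn (kRat ∘ fun r => √(2 * r - 2)) k (Ioo 1 (3 - √3)) := fun r hr => by
    rw [hk, div_sqrt_two_mul_sub_two_eq_kRat hr.1.le, Function.comp_apply]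
  refine ⟨(bijOn_kRat.comp bijOn_sqrt_two_mul_sub_two).congr hk_eq, ?_⟩
  have hcont : ContinuousAt k 1 := by
    rw [funext hk]
    exact ContinuousAt.div (by fun_prop) (by fun_prop) (by norm_num)
  have hk1 : k 1 = 1 := by norm_num [hk]
  simpa only [hk1] using hcont.tendsto.mono_left nhdsWithin_le_nhds
end

section
/- For γ = 5/3 (α = 1/3), the point P_⋄ defined by N_W = N_Z = 0 with W > Z and (W,Z) ≠ (0,0) exists and is unique on the half-plane W > Z for each r > 1; by the symmetry N_W(W,Z) = N_Z(Z,W), any solution of N_W = N_Z = 0 with W ≠ Z comes in pairs, and exactly one of each pair has W > Z. -/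
/-- For γ = 5/3 (α = 1/3) and any r > 1: the point P_⋄ with N_W = N_Z = 0,
W > Z, (W,Z) ≠ (0,0) exists and is unique; the symmetry N_W(W,Z) = N_Z(Z,W)
holds, so nontrivial zeros of (N_W, N_Z) with W ≠ Z come in pairs
{(W,Z), (Z,W)}, exactly one member of which lies in the half-plane W > Z. -/
theorem stmt_19 (α : ℝ) (hα : α = 1 / 3) (r : ℝ) (hr : 1 < r)
    (NW NZ : ℝ → ℝ → ℝ)
    (hNW : ∀ W Z, NW W Z = -(r + ((1 + 2 * α) * W + (1 - α) * Z) / 2) * W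
      + (α / 2) * Z ^ 2)
    (hNZ : ∀ W Z, NZ W Z = -(r + ((1 - α) * W + (1 + 2 * α) * Z) / 2) * Z
      + (α / 2) * W ^ 2) :
    (∃! p : ℝ × ℝ, p.2 < p.1 ∧ p ≠ (0, 0) ∧ NW p.1 p.2 = 0 ∧ NZ p.1 p.2 = 0)
    ∧ (∀ W Z, NW W Z = NZ Z W)
    ∧ (∀ W Z, W ≠ Z → NW W Z = 0 → NZ W Z = 0 →
        (NW Z W = 0 ∧ NZ Z W = 0 ∧ ((Z < W ∧ ¬ W < Z) ∨ (W < Z ∧ ¬ Z < W)))) := by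
  subst hα
  set s : ℝ := Real.sqrt 3 with hs
  have h3 : s ^ 2 = 3 := Real.sq_sqrt (by norm_num)
  have hs1 : 1 < s := by
    nlinarith [Real.sqrt_nonneg 3, h3]
  have hr0 : 0 < r := by linarith
  refine ⟨⟨(r * (s - 1) / 2, -(r * (s + 1) / 2)), ⟨?_, ?_, ?_, ?_⟩, ?_⟩, ?_, ?_⟩
  · simp only
    nlinarith
  · simp only [ne_eq, Prod.mk.injEq, not_and]
    intro h
    exfalso
    nlinarith
  · rw [hNW]
    simp only
    linear_combination (-(r ^ 2) / 12) * h3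
  · rw [hNZ]
    simp only
    linear_combination (-(r ^ 2) / 12) * h3
  · rintro ⟨W, Z⟩ ⟨hlt, hne, e1, e2⟩
    simp only at hlt hne e1 e2 ⊢
    rw [hNW] at e1
    rw [hNZ] at e2
    have hd : (W - Z) * (r + W + Z) = 0 := by linear_combination e2 - e1
    have hWZ : W - Z ≠ 0 := by intro h; apply absurd hlt; linarith [sub_eq_zero.mp h]
    have hrs : r + W + Z = 0 := by
      rcases mul_eq_zero.mp hd with h | h
      · exact absurd h hWZ
      · exact h
    have hW2 : (2 * W + r) ^ 2 = 3 * r ^ 2 := by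
      have hZ : Z = -r - W := by linarith
      subst hZ
      linear_combination (-6) * e1 - 6 * e2
    have hpos : 0 < 2 * W + r := by nlinarith
    have h4 : (2 * W + r - s * r) * (2 * W + r + s * r) = 0 := by
      linear_combination hW2 - r ^ 2 * h3
    have h5 : 2 * W + r = s * r := by
      rcases mul_eq_zero.mp h4 with h | h
      · linarith
      · exfalso; nlinarith
    have hW : W = r * (s - 1) / 2 := by linarith
    have hZ : Z = -(r * (s + 1) / 2) := by
      have : Z = -r - W := by linarith
      rw [this, hW]; ring
    exact Prod.ext hW hZ
  · intro W Z
    rw [hNW, hNZ]; ring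
  · intro W Z hne e1 e2
    rw [hNW] at e1
    rw [hNZ] at e2
    refine ⟨?_, ?_, ?_⟩
    · rw [hNW]; linear_combination e2
    · rw [hNZ]; linear_combination e1
    · rcases lt_or_gt_of_ne hne with h | h
      · exact Or.inr ⟨h, not_lt.mpr h.le⟩
      · exact Or.inl ⟨h, not_lt.mpr h.le⟩
end
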